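/- arXiv:0802.3770 — 3 statements merged into one kernel-verified Lean document; each statement's English description precedes it below -/
import Mathlib

section
/- (Leopoldo's Theorem) For every integer n, the absolute value of 6n + 1 is a prime number if and only if n ≠ 0 and there do not exist nonzero integers i and j with n = i + j(6i + 1). Equivalently, the set G_α of integers g for which |6g + 1| is prime equals the set of nonzero integers not lying in Ã. -/
theorem leopoldos_theorem (n : ℤ) :
    Nat.Prime (6 * n + 1).natAbs ↔
      n ≠ 0 ∧ ¬ ∃ i j : ℤ, i ≠ 0 ∧ j ≠ 0 ∧ n = i + j * (6 * i + 1) := by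
  constructor
  · intro hp
    constructor
    · rintro rfl
      norm_num at hp
    · rintro ⟨i, j, hi, hj, rfl⟩
      have h : (6 * (i + j * (6 * i + 1)) + 1) = (6 * i + 1) * (6 * j + 1) := by ring
      rw [h, Int.natAbs_mul] at hp
      rcases (Nat.prime_mul_iff.mp hp) with ⟨_, h1⟩ | ⟨_, h1⟩ <;> omega
  · rintro ⟨hn, hne⟩
    by_contra hp
    set N := (6 * n + 1).natAbs with hNdef
    have hN2 : 2 ≤ N := by omega
    obtain ⟨a, ⟨b, hab⟩, ha2, haN⟩ := Nat.exists_dvd_of_not_prime2 hN2 hp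
    have hb2 : 2 ≤ b := by
      rcases b with _ | _ | b
      · omega
      · omega
      · omega
    -- lift to ℤ with product exactly 6n+1
    obtain ⟨A, B, hAB, hA2, hB2⟩ :
        ∃ A B : ℤ, A * B = 6 * n + 1 ∧ 2 ≤ A.natAbs ∧ 2 ≤ B.natAbs := by
      have hcast : (a : ℤ) * (b : ℤ) = (N : ℤ) := by exact_mod_cast hab.symm
      rcases Int.natAbs_eq (6 * n + 1) with h | h
      · exact ⟨a, b, by rw [hcast]; omega, by simpa using ha2, by simpa using hb2⟩
      · exact ⟨-a, b, by rw [neg_mul, hcast]; omega, by simpa using ha2, by simpa using hb2⟩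
    -- A is coprime to 6
    have h2 : ¬ (2 : ℤ) ∣ A := by
      intro h
      have : (2 : ℤ) ∣ 6 * n + 1 := hAB ▸ h.mul_right B
      omega
    have h3 : ¬ (3 : ℤ) ∣ A := by
      intro h
      have : (3 : ℤ) ∣ 6 * n + 1 := hAB ▸ h.mul_right B
      omega
    have hmod : A % 6 = 1 ∨ A % 6 = 5 := by omega
    -- normalize sign so that d ≡ 1 (mod 6)
    obtain ⟨d, e, hde, hd2, he2, hdm⟩ :
        ∃ d e : ℤ, d * e = 6 * n + 1 ∧ 2 ≤ d.natAbs ∧ 2 ≤ e.natAbs ∧ d % 6 = 1 := by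
      rcases hmod with h | h
      · exact ⟨A, B, hAB, hA2, hB2, h⟩
      · exact ⟨-A, -B, by rw [neg_mul_neg]; exact hAB, by simpa using hA2,
          by simpa using hB2, by omega⟩
    obtain ⟨i, hd⟩ : ∃ i : ℤ, d = 6 * i + 1 := ⟨d / 6, by omega⟩
    rw [hd] at hde
    obtain ⟨j, he⟩ : ∃ j : ℤ, e = 6 * j + 1 := ⟨n - i * e, by linear_combination hde⟩
    rw [he] at hde
    apply hne
    refine ⟨i, j, by omega, by omega, ?_⟩
    have h6 : 6 * n = 6 * (i + j * (6 * i + 1)) := by linear_combination -hde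
    omega
end

section
/- For all natural numbers c₁, c₂ with 1 ≤ c₁ ≤ c₂, the number of primes p satisfying 6c₁ - 1 ≤ p ≤ 6c₂ + 1 equals 2(c₂ - c₁ + 1) minus the quantity Λ(c₁, c₂) := #{n ∈ {c₁, ..., c₂} : there exist nonzero integers i, j with n = i + j(6i + 1)} + #{n ∈ {c₁, ..., c₂} : there exist nonzero integers i, j with -n = i + j(6i + 1)}. -/
private lemma abs_factor' (a : ℕ) (ha2 : 2 ≤ a) (h2 : ¬ 2 ∣ a) (h3 : ¬ 3 ∣ a) :
    ∃ i : ℤ, i ≠ 0 ∧ ((a : ℤ) = 6 * i + 1 ∨ (a : ℤ) = -(6 * i + 1)) := by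
  have h6 : a % 6 = 1 ∨ a % 6 = 5 := by omega
  rcases h6 with h | h
  · exact ⟨((a : ℤ) - 1) / 6, by omega, Or.inl (by omega)⟩
  · exact ⟨(-(a : ℤ) - 1) / 6, by omega, Or.inr (by omega)⟩

private lemma rep_iff' (m : ℤ) (hm : m ≠ 0) :
    (∃ i j : ℤ, i ≠ 0 ∧ j ≠ 0 ∧ m = i + j * (6 * i + 1)) ↔
      ¬ Nat.Prime (6 * m + 1).natAbs := by
  constructor
  · rintro ⟨i, j, hi, hj, hm'⟩ hp
    have hprod : (6 * m + 1) = (6 * i + 1) * (6 * j + 1) := by linear_combination 6 * hm'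
    have hN : (6 * m + 1).natAbs = (6 * i + 1).natAbs * (6 * j + 1).natAbs := by
      rw [hprod, Int.natAbs_mul]
    have hi5 : 5 ≤ (6 * i + 1).natAbs := by omega
    have hj5 : 5 ≤ (6 * j + 1).natAbs := by omega
    rw [hN] at hp
    rcases Nat.prime_mul_iff.mp hp with ⟨_, h⟩ | ⟨_, h⟩ <;> omega
  · intro hp
    set N := (6 * m + 1).natAbs with hNdef
    have hN5 : 5 ≤ N := by omega
    have hN6 : N % 6 = 1 ∨ N % 6 = 5 := by omega
    obtain ⟨a, hadvd, ha2, haN⟩ := Nat.exists_dvd_of_not_prime2 (by omega) hp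
    obtain ⟨b, hab⟩ := hadvd
    have hb2 : 2 ≤ b := by
      rcases Nat.lt_or_ge b 2 with h | h
      · interval_cases b <;> omega
      · exact h
    have h2a : ¬ 2 ∣ a := fun h => by
      have : 2 ∣ N := by rw [hab]; exact h.mul_right b
      omega
    have h3a : ¬ 3 ∣ a := fun h => by
      have : 3 ∣ N := by rw [hab]; exact h.mul_right b
      omega
    have h2b : ¬ 2 ∣ b := fun h => by
      have : 2 ∣ N := by rw [hab]; exact h.mul_left a
      omega
    have h3b : ¬ 3 ∣ b := fun h => by
      have : 3 ∣ N := by rw [hab]; exact h.mul_left a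
      omega
    obtain ⟨i, hi0, hia⟩ := abs_factor' a ha2 h2a h3a
    obtain ⟨j, hj0, hjb⟩ := abs_factor' b hb2 h2b h3b
    have habZ : (a : ℤ) * b = (N : ℤ) := by exact_mod_cast congrArg (Nat.cast : ℕ → ℤ) hab.symm
    have hNpm : (N : ℤ) = 6 * m + 1 ∨ (N : ℤ) = -(6 * m + 1) := by omega
    have hmod : ∃ k : ℤ, (6 * i + 1) * (6 * j + 1) - 1 = 6 * k :=
      ⟨6 * i * j + i + j, by ring⟩
    have hP : (6 * i + 1) * (6 * j + 1) = (a : ℤ) * b ∨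
        (6 * i + 1) * (6 * j + 1) = -((a : ℤ) * b) := by
      rcases hia with h1 | h1 <;> rcases hjb with h2 | h2
      · exact Or.inl (by rw [h1, h2])
      · exact Or.inr (by rw [h1, h2]; ring)
      · exact Or.inr (by rw [h1, h2]; ring)
      · exact Or.inl (by rw [h1, h2]; ring)
    have h1' : (6 * i + 1) * (6 * j + 1) = (N : ℤ) ∨
        (6 * i + 1) * (6 * j + 1) = -(N : ℤ) := by
      rcases hP with h | h
      · exact Or.inl (h.trans habZ)
      · exact Or.inr (by rw [h, habZ])
    obtain ⟨k, hk⟩ := hmod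
    have hfinal : (6 * i + 1) * (6 * j + 1) = 6 * m + 1 := by
      generalize (6 * i + 1) * (6 * j + 1) = P at h1' hk ⊢
      omega
    refine ⟨i, j, hi0, hj0, ?_⟩
    have h6 : 6 * m = 6 * (i + j * (6 * i + 1)) := by linear_combination -hfinal
    exact mul_left_cancel₀ (by norm_num) h6

private lemma key_plus' (n : ℕ) (hn : 1 ≤ n) :
    (∃ i j : ℤ, i ≠ 0 ∧ j ≠ 0 ∧ (n : ℤ) = i + j * (6 * i + 1)) ↔ ¬ Nat.Prime (6 * n + 1) := by
  have h := rep_iff' (n : ℤ) (by omega)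
  have h2 : (6 * (n : ℤ) + 1).natAbs = 6 * n + 1 := by omega
  rw [h, h2]

private lemma key_minus' (n : ℕ) (hn : 1 ≤ n) :
    (∃ i j : ℤ, i ≠ 0 ∧ j ≠ 0 ∧ -(n : ℤ) = i + j * (6 * i + 1)) ↔ ¬ Nat.Prime (6 * n - 1) := by
  have h := rep_iff' (-(n : ℤ)) (by omega)
  have h2 : (6 * -(n : ℤ) + 1).natAbs = 6 * n - 1 := by omega
  rw [h, h2]

open Classical in
private lemma card_filter_coe' (s : Finset ℕ) (p : ℤ → Prop) :
    (Finset.filter p (do let a ← s; pure ((a : ℤ)))).card =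
      (s.filter (fun n : ℕ => p (n : ℤ))).card := by
  have h : (do let a ← s; pure ((a : ℤ))) = s.image (Nat.cast : ℕ → ℤ) := by
    ext x
    simp [Finset.bind_def, Finset.mem_sup]
  rw [h, Finset.filter_image, Finset.card_image_of_injective _ Nat.cast_injective]




open Classical in
theorem primes_in_interval_via_Lambda (c₁ c₂ : ℕ) (h1 : 1 ≤ c₁) (h12 : c₁ ≤ c₂) :
    ((Finset.Icc (6 * c₁ - 1) (6 * c₂ + 1)).filter Nat.Prime).card =
      2 * (c₂ - c₁ + 1)
        - (((Finset.Icc c₁ c₂).filter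
              (fun n => ∃ i j : ℤ, i ≠ 0 ∧ j ≠ 0 ∧ (n : ℤ) = i + j * (6 * i + 1))).card
           + ((Finset.Icc c₁ c₂).filter
              (fun n => ∃ i j : ℤ, i ≠ 0 ∧ j ≠ 0 ∧ -(n : ℤ) = i + j * (6 * i + 1))).card) := by
  rw [card_filter_coe' (Finset.Icc c₁ c₂)
        (fun n : ℤ => ∃ i j : ℤ, i ≠ 0 ∧ j ≠ 0 ∧ n = i + j * (6 * i + 1)),
      card_filter_coe' (Finset.Icc c₁ c₂)
        (fun n : ℤ => ∃ i j : ℤ, i ≠ 0 ∧ j ≠ 0 ∧ -n = i + j * (6 * i + 1))]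
  set S := Finset.Icc c₁ c₂ with hS
  have hAeq : S.filter (fun n : ℕ => ∃ i j : ℤ, i ≠ 0 ∧ j ≠ 0 ∧ (n : ℤ) = i + j * (6 * i + 1)) =
      S.filter (fun n => ¬ Nat.Prime (6 * n + 1)) := by
    apply Finset.filter_congr
    intro n hn
    rw [hS, Finset.mem_Icc] at hn
    exact key_plus' n (by omega)
  have hBeq : S.filter (fun n : ℕ => ∃ i j : ℤ, i ≠ 0 ∧ j ≠ 0 ∧ -(n : ℤ) = i + j * (6 * i + 1)) =
      S.filter (fun n => ¬ Nat.Prime (6 * n - 1)) := by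
    apply Finset.filter_congr
    intro n hn
    rw [hS, Finset.mem_Icc] at hn
    exact key_minus' n (by omega)
  have hdecomp : (Finset.Icc (6 * c₁ - 1) (6 * c₂ + 1)).filter Nat.Prime =
      ((S.filter fun n => Nat.Prime (6 * n - 1)).image fun n => 6 * n - 1) ∪
      ((S.filter fun n => Nat.Prime (6 * n + 1)).image fun n => 6 * n + 1) := by
    ext x
    simp only [Finset.mem_filter, Finset.mem_Icc, Finset.mem_union, Finset.mem_image, hS]
    constructor
    · rintro ⟨⟨hx1, hx2⟩, hp⟩
      have hx5 : 5 ≤ x := by omega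
      have h2 : ¬ 2 ∣ x := fun h => by rcases hp.eq_one_or_self_of_dvd 2 h with h' | h' <;> omega
      have h3 : ¬ 3 ∣ x := fun h => by rcases hp.eq_one_or_self_of_dvd 3 h with h' | h' <;> omega
      have hx6 : x % 6 = 1 ∨ x % 6 = 5 := by omega
      rcases hx6 with h | h
      · right
        refine ⟨(x - 1) / 6, ⟨⟨by omega, by omega⟩, ?_⟩, by omega⟩
        have he : 6 * ((x - 1) / 6) + 1 = x := by omega
        rw [he]; exact hp
      · left
        refine ⟨(x + 1) / 6, ⟨⟨by omega, by omega⟩, ?_⟩, by omega⟩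
        have he : 6 * ((x + 1) / 6) - 1 = x := by omega
        rw [he]; exact hp
    · rintro (⟨n, ⟨⟨hn1, hn2⟩, hpn⟩, rfl⟩ | ⟨n, ⟨⟨hn1, hn2⟩, hpn⟩, rfl⟩) <;>
        exact ⟨⟨by omega, by omega⟩, hpn⟩
  have hdisj : Disjoint ((S.filter fun n => Nat.Prime (6 * n - 1)).image fun n => 6 * n - 1)
      ((S.filter fun n => Nat.Prime (6 * n + 1)).image fun n => 6 * n + 1) := by
    rw [Finset.disjoint_left]
    rintro a ha hb
    simp only [Finset.mem_image, Finset.mem_filter, Finset.mem_Icc, hS] at ha hb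
    obtain ⟨n, ⟨⟨hn1, _⟩, _⟩, hna⟩ := ha
    obtain ⟨k, ⟨⟨hk1, _⟩, _⟩, hka⟩ := hb
    omega
  have hinj1 : (S.filter fun n => Nat.Prime (6 * n - 1)).card =
      ((S.filter fun n => Nat.Prime (6 * n - 1)).image fun n => 6 * n - 1).card := by
    rw [Finset.card_image_of_injOn]
    intro n hn k hk h
    simp only [Finset.mem_filter, Finset.mem_Icc, hS] at hn hk
    have h' : 6 * n - 1 = 6 * k - 1 := h
    omega
  have hinj2 : (S.filter fun n => Nat.Prime (6 * n + 1)).card =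
      ((S.filter fun n => Nat.Prime (6 * n + 1)).image fun n => 6 * n + 1).card := by
    rw [Finset.card_image_of_injOn]
    intro n hn k hk h
    simp only [Finset.mem_filter, Finset.mem_Icc, hS] at hn hk
    have h' : 6 * n + 1 = 6 * k + 1 := h
    omega
  have hc1 : (S.filter fun n => Nat.Prime (6 * n + 1)).card +
      (S.filter fun n => ¬ Nat.Prime (6 * n + 1)).card = S.card :=
    Finset.card_filter_add_card_filter_not _
  have hc2 : (S.filter fun n => Nat.Prime (6 * n - 1)).card +
      (S.filter fun n => ¬ Nat.Prime (6 * n - 1)).card = S.card :=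
    Finset.card_filter_add_card_filter_not _
  have hScard : S.card = c₂ - c₁ + 1 := by rw [hS, Nat.card_Icc]; omega
  rw [hdecomp, Finset.card_union_of_disjoint hdisj, ← hinj1, ← hinj2, hAeq, hBeq]
  omega
end

section
/- For every integer c ≥ 1, there exist nonzero integers i and j with -c = i + j(6i + 1) if and only if there exists an integer i with -(c + 1) ≤ 7i, i ≤ -1, and (6i + 1) dividing c + i. Consequently, the membership of -c in the sieve set Ã can be decided by testing only the indices i with -⌊(c+1)/7⌋ ≤ i ≤ -1. -/
private lemma sieve_aux (c a b : ℤ) (hc : 1 ≤ c) (ha : a < 0) (hb : b ≠ 0)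
    (h : -c = a + b * (6 * a + 1)) :
    -(c + 1) ≤ 7 * a ∧ a ≤ -1 ∧ (6 * a + 1) ∣ (c + a) := by
  have hb1 : 1 ≤ b := by
    rcases lt_or_gt_of_ne hb with hb' | hb'
    · exfalso; nlinarith
    · omega
  refine ⟨by nlinarith, by omega, ⟨-b, by linear_combination -h⟩⟩

theorem negative_membership_in_sieve_finite_test (c : ℤ) (hc : 1 ≤ c) :
    (∃ i j : ℤ, i ≠ 0 ∧ j ≠ 0 ∧ -c = i + j * (6 * i + 1)) ↔
      ∃ i : ℤ, -(c + 1) ≤ 7 * i ∧ i ≤ -1 ∧ (6 * i + 1) ∣ (c + i) := by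
  constructor
  · rintro ⟨i, j, hi, hj, h⟩
    rcases lt_or_gt_of_ne hi with hi' | hi'
    · exact ⟨i, sieve_aux c i j hc hi' hj h⟩
    · have hj' : j < 0 := by
        rcases lt_or_gt_of_ne hj with hj' | hj'
        · exact hj'
        · exfalso; nlinarith
      exact ⟨j, sieve_aux c j i hc hj' hi (by linear_combination h)⟩
  · rintro ⟨i, h1, h2, k, hk⟩
    have hpos : 0 < c + i := by linarith
    have hk0 : k ≠ 0 := by
      rintro rfl; simp at hk; omega
    refine ⟨i, -k, by omega, by simpa using hk0, by linear_combination -hk⟩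
end
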